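/- arXiv:1910.00181 — 3 statements merged into one kernel-verified Lean document; each statement's English description precedes it below -/
import Mathlib

section
/- Let n ≥ 2 and let r be an odd positive integer with 1 < r < 2n and gcd(r, 2n) = 1. Write 2n + 1 = k*r + n' with 0 ≤ n' < r. Then the equality n'^2 - (if k is even then n' else r - n') = r*(n' - 1) holds if and only if r divides 2n+1 or r divides n+1. Moreover, in either of these two cases k is necessarily odd. -/
/-!
Write `N = 2n + 1 = k r + n'`. For even `k` the equation factors as `(n' - 1)(n' - r) = 0`, forcing
`n' = 1`, i.e. `r ∣ 2n`, which coprimality excludes. For odd `k` it factors as `n' (n' + 1 - r) = 0`.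
The remainder `n'` is `0` exactly when `r ∣ N`, and `r - 1` exactly when `r ∣ N + 1 = 2(n + 1)`, i.e.
(as `r` is odd) when `r ∣ n + 1`. In the first case `k r = N` is odd, in the second `(k + 1) r = N + 1`
is even, so `k` is odd either way.
-/

section Factorization

variable {R : Type*} [CommRing R] [IsDomain R]

theorem sq_sub_self_eq_mul_sub_one_iff (s r : R) :
    s ^ 2 - s = r * (s - 1) ↔ s = 1 ∨ s = r := by
  rw [← sub_eq_zero, show s ^ 2 - s - r * (s - 1) = (s - 1) * (s - r) by ring, mul_eq_zero,
    sub_eq_zero, sub_eq_zero]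

theorem sq_sub_sub_eq_mul_sub_one_iff (s r : R) :
    s ^ 2 - (r - s) = r * (s - 1) ↔ s = 0 ∨ s = r - 1 := by
  rw [← sub_eq_zero, show s ^ 2 - (r - s) - r * (s - 1) = s * (s - (r - 1)) by ring, mul_eq_zero,
    sub_eq_zero]

end Factorization

namespace Int

variable {a k r s : ℤ}

theorem dvd_iff_eq_zero_of_eq_mul_add (hdiv : a = k * r + s) (h0 : 0 ≤ s) (h1 : s < r) :
    r ∣ a ↔ s = 0 := by
  rw [hdiv, dvd_add_right (dvd_mul_left r k)]
  exact ⟨eq_zero_of_dvd_of_nonneg_of_lt h0 h1, fun hs => hs ▸ dvd_zero r⟩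

theorem dvd_add_one_iff_eq_sub_one_of_eq_mul_add (hdiv : a = k * r + s) (h0 : 0 ≤ s)
    (h1 : s < r) : r ∣ a + 1 ↔ s = r - 1 := by
  rw [hdiv, add_assoc, dvd_add_right (dvd_mul_left r k)]
  constructor
  · intro hs
    have := le_of_dvd (by omega) hs
    omega
  · intro hs
    exact ⟨1, by omega⟩

theorem not_dvd_of_isCoprime (hr : 1 < r) (hcop : IsCoprime r a) : ¬r ∣ a := fun hdvd => by
  have := isUnit_iff.mp (hcop.isUnit_of_dvd' dvd_rfl hdvd)
  omega

theorem odd_of_two_mul_add_one_eq_mul_add {n : ℤ} (hodd : Odd r)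
    (hdiv : 2 * n + 1 = k * r + s) (hs : s = 0 ∨ s = r - 1) : Odd k := by
  rcases hs with rfl | rfl
  · have hkr : Odd (k * r) := ⟨n, by linarith⟩
    exact (odd_mul.mp hkr).1
  · have hkr : Even ((k + 1) * r) := ⟨n + 1, by linear_combination -hdiv⟩
    exact not_even_iff_odd.mp <|
      even_add_one.mp ((even_mul.mp hkr).resolve_right (not_even_iff_odd.mpr hodd))

end Int

open Int in
theorem stmt_7_general (n r k n' : ℤ) (hodd : Odd r) (hr : 1 < r)
    (hcop : IsCoprime r (2 * n))
    (hdiv : 2 * n + 1 = k * r + n') (h0 : 0 ≤ n') (h1 : n' < r) :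
    ((n' ^ 2 - (if Even k then n' else r - n') = r * (n' - 1)) ↔
      (r ∣ 2 * n + 1 ∨ r ∣ n + 1)) ∧
    ((r ∣ 2 * n + 1 ∨ r ∣ n + 1) → Odd k) := by
  have hdvd_iff : (r ∣ 2 * n + 1 ∨ r ∣ n + 1) ↔ n' = 0 ∨ n' = r - 1 := by
    have hdvd_succ : r ∣ n + 1 ↔ r ∣ 2 * n + 1 + 1 := by
      rw [show 2 * n + 1 + 1 = 2 * (n + 1) by ring]
      exact ⟨(Dvd.dvd.mul_left · 2), (isCoprime_two_right.mpr hodd).dvd_of_dvd_mul_left⟩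
    rw [hdvd_succ, dvd_iff_eq_zero_of_eq_mul_add hdiv h0 h1,
      dvd_add_one_iff_eq_sub_one_of_eq_mul_add hdiv h0 h1]
  have hk : (r ∣ 2 * n + 1 ∨ r ∣ n + 1) → Odd k :=
    fun h => odd_of_two_mul_add_one_eq_mul_add hodd hdiv (hdvd_iff.mp h)
  refine ⟨?_, hk⟩
  split_ifs with heven
  · have hne : n' ≠ 1 := fun hone =>
      not_dvd_of_isCoprime hr hcop ⟨k, by linarith⟩
    rw [sq_sub_self_eq_mul_sub_one_iff]
    exact iff_of_false (by omega) fun h => not_odd_iff_even.mpr heven (hk h)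
  · rw [sq_sub_sub_eq_mul_sub_one_iff, hdvd_iff]

/-- Arithmetic core of the rigidity classification in type B_n. -/
theorem stmt_7 (n r k n' : ℤ) (hn : 2 ≤ n) (hodd : Odd r) (hr : 1 < r)
    (hlt : r < 2 * n) (hcop : IsCoprime r (2 * n))
    (hdiv : 2 * n + 1 = k * r + n') (h0 : 0 ≤ n') (h1 : n' < r) :
    ((n' ^ 2 - (if Even k then n' else r - n') = r * (n' - 1)) ↔
      (r ∣ 2 * n + 1 ∨ r ∣ n + 1)) ∧
    ((r ∣ 2 * n + 1 ∨ r ∣ n + 1) → Odd k) :=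
  stmt_7_general n r k n' hodd hr hcop hdiv h0 h1
end

section
/- Let n ≥ 2 and r an odd integer with 1 < r < 2n and gcd(r, 2n) = 1. Write 2n = k*r + n' with 0 < n' < r. Then the equality n'^2 + (if k is even then n' else r - n') = r*n' holds if and only if r divides 2n - 1 or r divides 2n + 1. Moreover, if r divides 2n - 1 then k is odd, and if r divides 2n + 1 then k is even. -/
/-! Since `2n - 1 ≡ n' - 1` and `2n + 1 ≡ n' + 1 (mod r)` with `0 < n' < r`, the two divisibility
conditions say exactly `n' = 1` and `n' = r - 1`. For `k` even the equation factors as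
`n' (n' + 1 - r) = 0`, for `k` odd as `(n' - 1)(n' - r) = 0`. As `r` is odd, `2n = k r + n'` forces
`k ≡ n' (mod 2)`, which decides the parity of `k` in both cases and rules out the wrong root. -/

theorem Int.dvd_sub_iff_eq_of_eq_mul_add {a q r m b : ℤ} (h : a = q * r + m)
    (hm0 : 0 ≤ m) (hmr : m < r) (hb0 : 0 ≤ b) (hbr : b < r) : r ∣ a - b ↔ m = b := by
  have hred : r ∣ a - b ↔ r ∣ m - b := by
    rw [show a - b = m - b + q * r by rw [h]; ring]
    exact dvd_add_left (dvd_mul_left r q)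
  rw [hred]
  refine ⟨fun hdvd => ?_, fun hmb => by simp [hmb]⟩
  have hzero := Int.eq_zero_of_abs_lt_dvd hdvd (abs_lt.mpr ⟨by omega, by omega⟩)
  omega

theorem Int.even_iff_even_of_two_mul_eq {n q r m : ℤ} (hr : Odd r) (h : 2 * n = q * r + m) :
    Even q ↔ Even m := by
  have heven : Even (q * r + m) := h ▸ even_two_mul n
  simpa [Int.even_add, Int.even_mul, Int.not_even_iff_odd.mpr hr] using heven

theorem Int.sq_add_self_eq_mul_iff {m r : ℤ} (hm : m ≠ 0) : m ^ 2 + m = r * m ↔ m = r - 1 := by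
  rw [show m ^ 2 + m = (m + 1) * m by ring, mul_left_inj' hm]
  omega

theorem Int.sq_add_sub_self_eq_mul_iff {m r : ℤ} : m ^ 2 + (r - m) = r * m ↔ m = 1 ∨ m = r := by
  rw [← sub_eq_zero, show m ^ 2 + (r - m) - r * m = (m - 1) * (m - r) by ring, mul_eq_zero,
    sub_eq_zero, sub_eq_zero]

theorem stmt_8_general (n r k n' : ℤ) (hodd : Odd r)
    (hdiv : 2 * n = k * r + n') (h0 : 0 < n') (h1 : n' < r) :
    ((n' ^ 2 + (if Even k then n' else r - n') = r * n') ↔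
      (r ∣ 2 * n - 1 ∨ r ∣ 2 * n + 1)) ∧
    (r ∣ 2 * n - 1 → Odd k) ∧ (r ∣ 2 * n + 1 → Even k) := by
  have hminus : r ∣ 2 * n - 1 ↔ n' = 1 :=
    Int.dvd_sub_iff_eq_of_eq_mul_add hdiv h0.le h1 zero_le_one (by omega)
  have hplus : r ∣ 2 * n + 1 ↔ n' = r - 1 := by
    rw [show 2 * n + 1 = (k + 1) * r + n' - (r - 1) by rw [hdiv]; ring]
    exact Int.dvd_sub_iff_eq_of_eq_mul_add rfl h0.le h1 (by omega) (by omega)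
  have hpar : Even k ↔ Even n' := Int.even_iff_even_of_two_mul_eq hodd hdiv
  have hk_odd : n' = 1 → Odd k := fun h => by
    rw [← Int.not_even_iff_odd, hpar, h]; exact Int.not_even_one
  have hk_even : n' = r - 1 → Even k := fun h => hpar.mpr (h ▸ hodd.sub_odd odd_one)
  refine ⟨?_, hk_odd ∘ hminus.mp, hk_even ∘ hplus.mp⟩
  rw [hminus, hplus]
  split_ifs with hk
  · rw [Int.sq_add_self_eq_mul_iff h0.ne']
    have hne_one : n' ≠ 1 := fun h => Int.not_odd_iff_even.mpr hk (hk_odd h)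
    tauto
  · rw [Int.sq_add_sub_self_eq_mul_iff]
    have hne_pred : n' ≠ r - 1 := fun h => hk (hk_even h)
    have hne_r : n' ≠ r := h1.ne
    tauto

/-- Arithmetic core of the rigidity classification in type C_n. -/
theorem stmt_8 (n r k n' : ℤ) (hn : 2 ≤ n) (hodd : Odd r) (hr : 1 < r)
    (hlt : r < 2 * n) (hcop : IsCoprime r (2 * n))
    (hdiv : 2 * n = k * r + n') (h0 : 0 < n') (h1 : n' < r) :
    ((n' ^ 2 + (if Even k then n' else r - n') = r * n') ↔
      (r ∣ 2 * n - 1 ∨ r ∣ 2 * n + 1)) ∧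
    (r ∣ 2 * n - 1 → Odd k) ∧ (r ∣ 2 * n + 1 → Even k) :=
  stmt_8_general n r k n' hodd hdiv h0 h1
end

section
/- Let n ≥ 2, let r be a positive integer with gcd(r,n) = 1 and r < n, write n = k*r + n' with 0 ≤ n' < r, and let J be the n×n nilpotent Jordan block. Then the dimension of the conjugacy orbit of J^r under GL_n(ℂ) (acting by conjugation on nilpotent matrices, computed inside sl_n, i.e. n^2 - 1 minus the dimension of the centralizer in sl_n) equals n^2 - k*r^2 - n'^2. -/
def jordanBlock (n : ℕ) : Matrix (Fin n) (Fin n) ℂ :=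
  Matrix.of fun i j => if (i : ℕ) = (j : ℕ) + 1 then 1 else 0

/-!
Reindexing `Fin n` by `i ↦ (i % r, i / r)` turns `J ^ r` into a block-diagonal matrix of Jordan
blocks: `n'` of size `k + 1` and `r - n'` of size `k`. The centralizer of a block-diagonal matrix
splits into the spaces of intertwiners `X` with `J_p * X = X * J_q` between pairs of blocks. Such
an `X` is determined by its first column `v` (its `j`-th column is `J_p ^ j * v`), subject only to
`J_p ^ q * v = 0`, so these spaces have dimension `min p q`. Summing over pairs of blocks, the
centralizer of `J ^ r` in `gl_n` has dimension `k * r ^ 2 + n' ^ 2`; it contains the identity,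
whose trace `n` is nonzero, so its intersection with `sl_n` has dimension one less.
-/

open Matrix Module

lemma finrank_inf_ker_add_one {K V : Type*} [Field K] [AddCommGroup V] [Module K V]
    [FiniteDimensional K V] (f : Module.Dual K V) {C : Submodule K V} {x : V} (hxC : x ∈ C)
    (hx : f x ≠ 0) :
    finrank K ↥(C ⊓ LinearMap.ker f) + 1 = finrank K C := by
  have hf : f.domRestrict C ≠ 0 := fun h => hx (by simpa using LinearMap.congr_fun h ⟨x, hxC⟩)
  rw [← Module.Dual.finrank_ker_add_one_of_ne_zero hf, LinearMap.ker_domRestrict,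
    ← (Submodule.comapSubtypeEquivOfLe (inf_le_left : C ⊓ LinearMap.ker f ≤ C)).finrank_eq,
    Submodule.comap_inf, Submodule.comap_subtype_self, top_inf_eq]

section Intertwiners

variable {R : Type*} [CommRing R] {m n : Type*} [Fintype m] [Fintype n]

def intertwiners (A : Matrix m m R) (B : Matrix n n R) : Submodule R (Matrix m n R) where
  carrier := {X | A * X = X * B}
  add_mem' {X Y} hX hY := by simp_all [Matrix.mul_add, Matrix.add_mul]
  zero_mem' := by simp
  smul_mem' c X hX := by simp_all [Matrix.mul_smul, Matrix.smul_mul]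

variable {A : Matrix m m R} {B : Matrix n n R}

@[simp]
lemma mem_intertwiners {X : Matrix m n R} : X ∈ intertwiners A B ↔ A * X = X * B := Iff.rfl

lemma one_mem_intertwiners_self [DecidableEq n] (A : Matrix n n R) : 1 ∈ intertwiners A A := by
  simp

lemma ker_mulLeft_sub_mulRight (A : Matrix n n R) [DecidableEq n] :
    LinearMap.ker (LinearMap.mulLeft R A - LinearMap.mulRight R A) = intertwiners A A := by
  ext X
  simp [sub_eq_zero]

lemma reindex_mem_intertwiners_reindex_iff {m' n' : Type*} [Fintype m'] [Fintype n']
    (e : m ≃ m') (f : n ≃ n') {X : Matrix m n R} :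
    reindex e f X ∈ intertwiners (reindex e e A) (reindex f f B) ↔ X ∈ intertwiners A B := by
  rw [mem_intertwiners, mem_intertwiners, ← (reindex e f).injective.eq_iff]
  simp only [reindex_apply, submatrix_mul_equiv]

lemma map_reindexLinearEquiv_intertwiners {m' n' : Type*} [Fintype m'] [Fintype n']
    (e : m ≃ m') (f : n ≃ n') :
    (intertwiners A B).map (reindexLinearEquiv R R e f : Matrix m n R →ₗ[R] Matrix m' n' R) =
      intertwiners (reindex e e A) (reindex f f B) := by
  ext Y
  obtain ⟨X, rfl⟩ := (reindex e f).surjective Y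
  rw [Submodule.mem_map_equiv, symm_reindexLinearEquiv, coe_reindexLinearEquiv,
    reindex_mem_intertwiners_reindex_iff]
  simp

lemma finrank_intertwiners_reindex {K : Type*} [Field K] {m' n' : Type*} [Fintype m'] [Fintype n']
    {A : Matrix m m K} {B : Matrix n n K} (e : m ≃ m') (f : n ≃ n') :
    finrank K (intertwiners (reindex e e A) (reindex f f B)) = finrank K (intertwiners A B) := by
  rw [← map_reindexLinearEquiv_intertwiners, LinearEquiv.finrank_map_eq]

end Intertwiners

section BlockDiagonal

variable {R : Type*} [CommRing R] {ι : Type*} [Fintype ι] [DecidableEq ι] {m n : ι → Type*}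

lemma blockDiagonal'_mul_submatrix_sigmaMk [∀ a, Fintype (m a)] (A : ∀ a, Matrix (m a) (m a) R)
    (X : Matrix (Σ a, m a) (Σ b, n b) R) (a b : ι) :
    (blockDiagonal' A * X).submatrix (Sigma.mk a) (Sigma.mk b) =
      A a * X.submatrix (Sigma.mk a) (Sigma.mk b) := by
  ext i j
  simp [mul_apply, Fintype.sum_sigma, blockDiagonal'_apply']

lemma mul_blockDiagonal'_submatrix_sigmaMk [∀ b, Fintype (n b)] (B : ∀ b, Matrix (n b) (n b) R)
    (X : Matrix (Σ a, m a) (Σ b, n b) R) (a b : ι) :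
    (X * blockDiagonal' B).submatrix (Sigma.mk a) (Sigma.mk b) =
      X.submatrix (Sigma.mk a) (Sigma.mk b) * B b := by
  ext i j
  simp [mul_apply, Fintype.sum_sigma, blockDiagonal'_apply']

variable [∀ a, Fintype (m a)] [∀ b, Fintype (n b)] {A : ∀ a, Matrix (m a) (m a) R}
  {B : ∀ b, Matrix (n b) (n b) R}

lemma mem_intertwiners_blockDiagonal'_iff {X : Matrix (Σ a, m a) (Σ b, n b) R} :
    X ∈ intertwiners (blockDiagonal' A) (blockDiagonal' B) ↔
      ∀ a b, X.submatrix (Sigma.mk a) (Sigma.mk b) ∈ intertwiners (A a) (B b) := by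
  simp only [mem_intertwiners, ← blockDiagonal'_mul_submatrix_sigmaMk,
    ← mul_blockDiagonal'_submatrix_sigmaMk]
  constructor
  · intro h a b
    rw [h]
  · intro h
    ext ⟨a, i⟩ ⟨b, j⟩
    exact congrFun₂ (h a b) i j

def intertwinersBlockDiagonal'Equiv :
    intertwiners (blockDiagonal' A) (blockDiagonal' B) ≃ₗ[R]
      Π a b, intertwiners (A a) (B b) where
  toFun X a b := ⟨X.1.submatrix (Sigma.mk a) (Sigma.mk b),
    mem_intertwiners_blockDiagonal'_iff.1 X.2 a b⟩
  invFun Y := ⟨Matrix.of fun i j => (Y i.1 j.1).1 i.2 j.2,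
    mem_intertwiners_blockDiagonal'_iff.2 fun a b => (Y a b).2⟩
  map_add' _ _ := rfl
  map_smul' _ _ := rfl
  left_inv _ := rfl
  right_inv _ := rfl

lemma finrank_intertwiners_blockDiagonal' {K : Type*} [Field K] {A : ∀ a, Matrix (m a) (m a) K}
    {B : ∀ b, Matrix (n b) (n b) K} :
    finrank K (intertwiners (blockDiagonal' A) (blockDiagonal' B)) =
      ∑ a, ∑ b, finrank K (intertwiners (A a) (B b)) := by
  simp only [intertwinersBlockDiagonal'Equiv.finrank_eq, finrank_pi_fintype]

end BlockDiagonal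

section JordanBlock

variable {p q : ℕ}

lemma mul_jordanBlock_apply (X : Matrix (Fin p) (Fin q) ℂ) (i : Fin p) (j : Fin q) :
    (X * jordanBlock q) i j = if h : (j : ℕ) + 1 < q then X i ⟨j + 1, h⟩ else 0 := by
  split_ifs with h
  · rw [mul_apply, Finset.sum_eq_single ⟨j + 1, h⟩] <;>
      simp +contextual [jordanBlock, Fin.ext_iff]
  · rw [mul_apply]
    refine Finset.sum_eq_zero fun l _ => ?_
    simp only [jordanBlock, of_apply, mul_ite, mul_one, mul_zero, ite_eq_right_iff]
    omega

lemma jordanBlock_pow_apply (n m : ℕ) (i j : Fin n) :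
    (jordanBlock n ^ m) i j = if (i : ℕ) = j + m then 1 else 0 := by
  induction m generalizing j with
  | zero => simp [one_apply, Fin.ext_iff]
  | succ m ih =>
    rw [pow_succ, mul_jordanBlock_apply]
    split_ifs <;> simp_all <;> omega

lemma jordanBlock_pow_mulVec_eq_zero_iff {v : Fin p → ℂ} :
    jordanBlock p ^ q *ᵥ v = 0 ↔ ∀ i : Fin p, (i : ℕ) + q < p → v i = 0 := by
  simp only [funext_iff, mulVec, dotProduct, jordanBlock_pow_apply, ite_mul, one_mul, zero_mul,
    Pi.zero_apply]
  constructor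
  · intro h i hi
    simpa [Fin.val_inj, eq_comm] using h ⟨i + q, hi⟩
  · intro h i
    refine Finset.sum_eq_zero fun l _ => ?_
    split_ifs with hl
    · exact h l (hl ▸ i.isLt)
    · rfl

lemma ker_jordanBlock_pow_mulVecLin (p q : ℕ) :
    LinearMap.ker (jordanBlock p ^ q).mulVecLin =
      LinearMap.ker (LinearMap.funLeft ℂ ℂ (Fin.castLE (Nat.sub_le p q))) := by
  ext v
  rw [LinearMap.mem_ker, LinearMap.mem_ker, mulVecLin_apply, jordanBlock_pow_mulVec_eq_zero_iff]
  simp only [funext_iff, LinearMap.funLeft_apply, Pi.zero_apply]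
  constructor
  · intro h c
    exact h _ (by simp; omega)
  · intro h i hi
    exact h ⟨i, by omega⟩

lemma finrank_ker_jordanBlock_pow (p q : ℕ) :
    finrank ℂ (LinearMap.ker (jordanBlock p ^ q).mulVecLin) = min p q := by
  have hsurj := LinearMap.funLeft_surjective_of_injective ℂ ℂ _
    (Fin.castLE_injective (Nat.sub_le p q))
  have hrank := LinearMap.finrank_range_add_finrank_ker
    (LinearMap.funLeft ℂ ℂ (Fin.castLE (Nat.sub_le p q)))
  rw [LinearMap.range_eq_top.2 hsurj, finrank_top, finrank_fin_fun, finrank_fin_fun] at hrank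
  rw [ker_jordanBlock_pow_mulVecLin]
  omega

lemma mem_intertwiners_jordanBlock_iff {X : Matrix (Fin p) (Fin q) ℂ} :
    X ∈ intertwiners (jordanBlock p) (jordanBlock q) ↔
      ∀ j : Fin q,
        jordanBlock p *ᵥ Xᵀ j = if h : (j : ℕ) + 1 < q then Xᵀ ⟨j + 1, h⟩ else 0 := by
  rw [mem_intertwiners, ← Matrix.ext_iff, forall_comm]
  refine forall_congr' fun j => ?_
  rw [funext_iff]
  refine forall_congr' fun i => ?_
  rw [mul_jordanBlock_apply]
  split_ifs <;> rfl

lemma transpose_eq_jordanBlock_pow_mulVec {X : Matrix (Fin p) (Fin q) ℂ}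
    (hX : X ∈ intertwiners (jordanBlock p) (jordanBlock q)) (j : Fin q) :
    Xᵀ j = jordanBlock p ^ (j : ℕ) *ᵥ Xᵀ ⟨0, j.pos⟩ := by
  obtain ⟨j, hj⟩ := j
  induction j with
  | zero => simp
  | succ j ih =>
    have hstep := mem_intertwiners_jordanBlock_iff.1 hX ⟨j, by omega⟩
    rw [dif_pos hj] at hstep
    rw [← hstep, ih (by omega), pow_succ', ← mulVec_mulVec]

lemma jordanBlock_pow_mulVec_transpose_zero {X : Matrix (Fin p) (Fin q) ℂ}
    (hX : X ∈ intertwiners (jordanBlock p) (jordanBlock q)) (hq : 0 < q) :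
    jordanBlock p ^ q *ᵥ Xᵀ ⟨0, hq⟩ = 0 := by
  have hlast := mem_intertwiners_jordanBlock_iff.1 hX ⟨q - 1, by omega⟩
  rw [dif_neg (by simp; omega), transpose_eq_jordanBlock_pow_mulVec hX, mulVec_mulVec,
    ← pow_succ', Nat.sub_add_cancel hq] at hlast
  exact hlast

noncomputable def intertwinersJordanBlockEquiv (hq : 0 < q) :
    intertwiners (jordanBlock p) (jordanBlock q) ≃ₗ[ℂ]
      LinearMap.ker (jordanBlock p ^ q).mulVecLin where
  toFun X := ⟨X.1ᵀ ⟨0, hq⟩, jordanBlock_pow_mulVec_transpose_zero X.2 hq⟩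
  invFun v := ⟨Matrix.of fun i (j : Fin q) => (jordanBlock p ^ (j : ℕ) *ᵥ v.1) i,
    mem_intertwiners_jordanBlock_iff.2 fun j => by
      show jordanBlock p *ᵥ (jordanBlock p ^ (j : ℕ) *ᵥ v.1) =
        if h : (j : ℕ) + 1 < q then jordanBlock p ^ ((j : ℕ) + 1) *ᵥ v.1 else 0
      rw [mulVec_mulVec, ← pow_succ']
      split_ifs with h
      · rfl
      · rw [show (j : ℕ) + 1 = q by omega]
        exact v.2⟩
  map_add' _ _ := rfl
  map_smul' _ _ := rfl
  left_inv X := Subtype.ext <| by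
    ext i j
    exact (congrFun (transpose_eq_jordanBlock_pow_mulVec X.2 j) i).symm
  right_inv v := Subtype.ext <| by
    show jordanBlock p ^ 0 *ᵥ v.1 = v.1
    simp

lemma finrank_intertwiners_jordanBlock (p q : ℕ) :
    finrank ℂ (intertwiners (jordanBlock p) (jordanBlock q)) = min p q := by
  rcases q.eq_zero_or_pos with rfl | hq
  · rw [finrank_zero_of_subsingleton, min_zero]
  · rw [(intertwinersJordanBlockEquiv hq).finrank_eq, finrank_ker_jordanBlock_pow]

end JordanBlock

section BlockDecomposition

lemma add_mul_eq_add_mul_iff {r a b s t : ℕ} (ha : a < r) (hb : b < r) :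
    a + r * s = b + r * t ↔ a = b ∧ s = t := by
  refine ⟨fun h => ?_, fun ⟨hab, hst⟩ => hab ▸ hst ▸ rfl⟩
  have hr : 0 < r := by omega
  obtain ⟨hdiv, hmod⟩ := (Nat.div_mod_unique hr).2 ⟨h, ha⟩
  rw [Nat.add_mul_div_left _ _ hr, Nat.div_eq_of_lt hb, zero_add] at hdiv
  rw [Nat.add_mul_mod_self_left, Nat.mod_eq_of_lt hb] at hmod
  exact ⟨hmod.symm, hdiv.symm⟩

def blockSize (k n' : ℕ) {r : ℕ} (a : Fin r) : ℕ := k + if (a : ℕ) < n' then 1 else 0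

lemma add_mul_lt_iff_lt_blockSize {k n' r : ℕ} (hn' : n' < r) (a : Fin r) (s : ℕ) :
    a + r * s < k * r + n' ↔ s < blockSize k n' a := by
  have ha := a.isLt
  unfold blockSize
  rcases Nat.lt_or_ge s k with hs | hs <;> have := Nat.mul_le_mul_left r hs <;>
    split_ifs <;> constructor <;> intro <;> nlinarith

variable {k n' r : ℕ}

noncomputable def blockIndexEquiv (hn' : n' < r) :
    (Σ a : Fin r, Fin (blockSize k n' a)) ≃ Fin (k * r + n') :=
  Equiv.ofBijective
    (fun x => ⟨x.1 + r * x.2, (add_mul_lt_iff_lt_blockSize hn' x.1 x.2).2 x.2.isLt⟩)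
    ⟨by
      rintro ⟨a, s⟩ ⟨b, t⟩ h
      obtain ⟨hab, hst⟩ := (add_mul_eq_add_mul_iff a.isLt b.isLt).1 (Fin.val_eq_of_eq h)
      obtain rfl := Fin.ext hab
      obtain rfl := Fin.ext hst
      rfl,
    fun i => ⟨⟨⟨i % r, Nat.mod_lt _ (by omega)⟩, ⟨i / r,
      (add_mul_lt_iff_lt_blockSize hn' _ _).1 (by simp [Nat.mod_add_div])⟩⟩,
      Fin.ext (Nat.mod_add_div _ _)⟩⟩

@[simp]
lemma val_blockIndexEquiv (hn' : n' < r) (a : Fin r) (s : Fin (blockSize k n' a)) :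
    (blockIndexEquiv hn' ⟨a, s⟩ : ℕ) = a + r * s :=
  rfl

lemma reindex_jordanBlock_pow (hn' : n' < r) :
    reindex (blockIndexEquiv hn').symm (blockIndexEquiv hn').symm (jordanBlock (k * r + n') ^ r) =
      blockDiagonal' fun a => jordanBlock (blockSize k n' a) := by
  ext ⟨a, s⟩ ⟨b, t⟩
  simp only [reindex_apply, Equiv.symm_symm, submatrix_apply, jordanBlock_pow_apply,
    val_blockIndexEquiv, add_assoc, ← Nat.mul_add_one, add_mul_eq_add_mul_iff a.isLt b.isLt]
  by_cases hab : a = b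
  · subst hab
    simp [jordanBlock]
  · simp [hab, blockDiagonal'_apply_ne, Fin.val_inj]

lemma sum_sum_min_blockSize (hn' : n' < r) :
    ∑ a : Fin r, ∑ b : Fin r, min (blockSize k n' a) (blockSize k n' b) =
      k * r ^ 2 + n' ^ 2 := by
  have hmin (a b : Fin r) : min (blockSize k n' a) (blockSize k n' b) =
      k + (if (a : ℕ) < n' then 1 else 0) * (if (b : ℕ) < n' then 1 else 0) := by
    unfold blockSize
    split_ifs <;> simp
  have hcount : ∑ a : Fin r, (if (a : ℕ) < n' then 1 else 0) = n' := by
    rw [Finset.sum_boole, Fin.card_filter_val_lt, Nat.cast_id, min_eq_right hn'.le]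
  simp only [hmin, Finset.sum_add_distrib, ← Finset.mul_sum, ← Finset.sum_mul, hcount,
    Finset.sum_const, Finset.card_univ, Fintype.card_fin, smul_eq_mul]
  ring

lemma finrank_intertwiners_jordanBlock_pow {n r k n' : ℕ} (hdiv : n = k * r + n')
    (hn' : n' < r) :
    finrank ℂ (intertwiners (jordanBlock n ^ r) (jordanBlock n ^ r)) = k * r ^ 2 + n' ^ 2 := by
  subst hdiv
  rw [← finrank_intertwiners_reindex (blockIndexEquiv hn').symm (blockIndexEquiv hn').symm,
    reindex_jordanBlock_pow, finrank_intertwiners_blockDiagonal']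
  simp only [finrank_intertwiners_jordanBlock]
  exact sum_sum_min_blockSize hn'

end BlockDecomposition

theorem stmt_11_general (n r k n' : ℕ) (hn : 2 ≤ n) (hdiv : n = k * r + n') (h1 : n' < r) :
    n ^ 2 - 1 -
        Module.finrank ℂ
          ↥((LinearMap.ker
              (LinearMap.mulLeft ℂ (jordanBlock n ^ r) -
                LinearMap.mulRight ℂ (jordanBlock n ^ r))) ⊓
            (LinearMap.ker (Matrix.traceLinearMap (Fin n) ℂ ℂ))) =
      n ^ 2 - k * r ^ 2 - n' ^ 2 := by
  rw [ker_mulLeft_sub_mulRight]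
  have hdim := finrank_intertwiners_jordanBlock_pow hdiv h1
  have hn0 : (n : ℂ) ≠ 0 := Nat.cast_ne_zero.2 (by omega)
  have htrace := finrank_inf_ker_add_one (traceLinearMap (Fin n) ℂ ℂ)
    (one_mem_intertwiners_self (jordanBlock n ^ r)) (by simpa using hn0)
  have hle := Submodule.finrank_le (intertwiners (jordanBlock n ^ r) (jordanBlock n ^ r))
  rw [finrank_matrix, Fintype.card_fin, finrank_self] at hle
  omega

/-- Orbit dimension of N_r = J^r in type A: (n² - 1) minus the dimension of the
centralizer of J^r in sl_n equals n² - k*r² - n'², where n = k*r + n'. -/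
theorem stmt_11 (n r k n' : ℕ) (hn : 2 ≤ n) (hcop : Nat.gcd r n = 1)
    (hr : 0 < r) (hrn : r < n) (hdiv : n = k * r + n') (h1 : n' < r) :
    n ^ 2 - 1 -
        Module.finrank ℂ
          ↥((LinearMap.ker
              (LinearMap.mulLeft ℂ (jordanBlock n ^ r) -
                LinearMap.mulRight ℂ (jordanBlock n ^ r))) ⊓
            (LinearMap.ker (Matrix.traceLinearMap (Fin n) ℂ ℂ))) =
      n ^ 2 - k * r ^ 2 - n' ^ 2 :=
  stmt_11_general n r k n' hn hdiv h1
end
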